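/- Let G be a finite simple graph and T an induced subtree of G with |V(T)| − 1 = cc(G). Then Z_+(G) = |V(G)| − |V(T)| + 1; in particular, colouring one vertex of T and all vertices of V(G) \ V(T) black yields an optimal positive zero forcing set of G. -/

import Mathlib

variable {V : Type*}

/-- The standard zero forcing colour change rule: a black vertex `u` (i.e. `u ∈ S`)
forces its unique white neighbour `w`. -/
def ZFForce (G : SimpleGraph V) (S : Set V) (u w : V) : Prop :=
  u ∈ S ∧ w ∉ S ∧ G.Adj u w ∧ ∀ x, G.Adj u x → x ∉ S → x = w

/-- `x` and `y` are joined by a path of `G` all of whose vertices avoid `S`,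
i.e. they lie in the same connected component of `G − S`. -/
def ConnOutside (G : SimpleGraph V) (S : Set V) : V → V → Prop :=
  Relation.ReflTransGen fun x y => x ∉ S ∧ y ∉ S ∧ G.Adj x y

/-- The positive (semidefinite) colour change rule: a black vertex `u` forces a white
neighbour `w` provided `w` is the only white neighbour of `u` lying in the connected
component of `G − S` containing `w`. -/
def PSDForce (G : SimpleGraph V) (S : Set V) (u w : V) : Prop :=
  u ∈ S ∧ w ∉ S ∧ G.Adj u w ∧
    ∀ x, G.Adj u x → x ∉ S → ConnOutside G S x w → x = w

/-- A list of forces, applied in order starting with black set `S`, is a valid sequence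
of applications of the standard colour change rule. -/
def ZFValid (G : SimpleGraph V) : Set V → List (V × V) → Prop
  | _, [] => True
  | S, p :: L => ZFForce G S p.1 p.2 ∧ ZFValid G (insert p.2 S) L

/-- A list of forces, applied in order starting with black set `S`, is a valid sequence
of applications of the positive colour change rule. -/
def PSDValid (G : SimpleGraph V) : Set V → List (V × V) → Prop
  | _, [] => True
  | S, p :: L => PSDForce G S p.1 p.2 ∧ PSDValid G (insert p.2 S) L

/-- The black set resulting from performing the given list of forces. -/
def applyForces (S : Set V) (L : List (V × V)) : Set V :=
  L.foldl (fun T p => insert p.2 T) S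

/-- `B` is a zero forcing set: repeatedly applying the colour change rule starting from
`B` colours every vertex black. -/
def IsZeroForcingSet (G : SimpleGraph V) (B : Set V) : Prop :=
  ∃ L : List (V × V), ZFValid G B L ∧ applyForces B L = Set.univ

/-- `B` is a positive zero forcing set. -/
def IsPSDForcingSet (G : SimpleGraph V) (B : Set V) : Prop :=
  ∃ L : List (V × V), PSDValid G B L ∧ applyForces B L = Set.univ

/-- The zero forcing number `Z(G)`. -/
noncomputable def zfNum (G : SimpleGraph V) : ℕ :=
  sInf {n | ∃ B : Set V, B.ncard = n ∧ IsZeroForcingSet G B}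

/-- The positive (semidefinite) zero forcing number `Z₊(G)`. -/
noncomputable def psdNum (G : SimpleGraph V) : ℕ :=
  sInf {n | ∃ B : Set V, B.ncard = n ∧ IsPSDForcingSet G B}

/-- A clique cover of `G`: a finite family of cliques covering every edge of `G`. -/
def IsCliqueCover (G : SimpleGraph V) (𝒞 : Finset (Set V)) : Prop :=
  (∀ C ∈ 𝒞, G.IsClique C) ∧ ∀ u v, G.Adj u v → ∃ C ∈ 𝒞, u ∈ C ∧ v ∈ C

/-- The clique cover number `cc(G)`. -/
noncomputable def ccNum (G : SimpleGraph V) : ℕ :=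
  sInf {n | ∃ 𝒞 : Finset (Set V), 𝒞.card = n ∧ IsCliqueCover G 𝒞}

/-- A tree cover of `G`: a family of vertex-disjoint induced subtrees whose vertex sets
partition `V(G)`. -/
def IsTreeCover (G : SimpleGraph V) (𝒯 : Finset (Set V)) : Prop :=
  (∀ S ∈ 𝒯, (G.induce S).IsTree) ∧
    (∀ S ∈ 𝒯, ∀ T ∈ 𝒯, S ≠ T → Disjoint S T) ∧
    ∀ v : V, ∃ S ∈ 𝒯, v ∈ S

/-- The tree cover number `T(G)`. -/
noncomputable def tcNum (G : SimpleGraph V) : ℕ :=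
  sInf {n | ∃ 𝒯 : Finset (Set V), 𝒯.card = n ∧ IsTreeCover G 𝒯}

/-- A graph is chordal if it contains no induced cycle on four or more vertices. -/
def IsChordal (G : SimpleGraph V) : Prop :=
  ∀ n, 4 ≤ n → IsEmpty (SimpleGraph.cycleGraph n ↪g G)

/-- `C` is a maximal clique of `G`. -/
def IsMaxClique (G : SimpleGraph V) (C : Set V) : Prop :=
  G.IsClique C ∧ ∀ D : Set V, G.IsClique D → C ⊆ D → C = D

/-- A chordal graph is non-trivial if it has at least two distinct maximal cliques. -/
def NonTrivialChordal (G : SimpleGraph V) : Prop :=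
  IsChordal G ∧ ∃ C₁ C₂ : Set V, IsMaxClique G C₁ ∧ IsMaxClique G C₂ ∧ C₁ ≠ C₂

/-- A vertex is simplicial if its neighbourhood induces a clique. -/
def IsSimplicial (G : SimpleGraph V) (v : V) : Prop :=
  G.IsClique (G.neighborSet v)


/-!
The lower bound is the general inequality `|V(G)| - cc(G) ≤ Z₊(G)`: a force `u → w` turns
every clique containing `u` and `w` entirely black, so no two forces use a common clique of a
clique cover and there are at most `cc(G)` of them.

For the upper bound, colour `tᶜ` and one vertex of `t` black. As long as some vertex is white,
the tree `t` has an edge `u w` with `u` black and `w` white, and `u` may force `w`: a second white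
neighbour of `u` in the component of `w` in `G - S ⊆ t` would close a cycle through `u` in `t`.
-/

open SimpleGraph

lemma SimpleGraph.IsAcyclic.eq_of_adj_of_walk {W : Type*} {H : SimpleGraph W} (hH : H.IsAcyclic)
    {u x w : W} (hx : H.Adj u x) (hw : H.Adj u w) (p : H.Walk x w) (hu : u ∉ p.support) :
    x = w := by
  classical
  have hq : (Walk.cons hx p.bypass).IsPath :=
    p.bypass_isPath.cons fun h => hu (p.support_bypass_subset_support h)
  simpa using (hH.eq_snd_of_adj_start hq hw (by simp)).symm

variable {G : SimpleGraph V}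

section LowerBound

lemma ncard_applyForces_le (S : Set V) (L : List (V × V)) :
    (applyForces S L).ncard ≤ S.ncard + L.length := by
  induction L generalizing S with
  | nil => simp [applyForces]
  | cons p L ih =>
    have := ih (insert p.2 S)
    have := Set.ncard_insert_le p.2 S
    simp only [applyForces, List.foldl_cons, List.length_cons] at *
    omega

lemma PSDForce.subset_insert_of_isClique {S C : Set V} {u w : V} (h : PSDForce G S u w)
    (hC : G.IsClique C) (hu : u ∈ C) (hw : w ∈ C) : C ⊆ insert w S := by
  intro x hx
  by_contra hxS
  simp only [Set.mem_insert_iff, not_or] at hxS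
  obtain ⟨hxw, hxS⟩ := hxS
  have hux : G.Adj u x := hC hu hx fun hux => hxS (hux ▸ h.1)
  exact hxw (h.2.2.2 x hux hxS (.single ⟨hxS, h.2.1, hC hx hw hxw⟩))

open Classical in
lemma PSDValid.length_le_card_filter {𝒞 : Finset (Set V)} (h𝒞 : IsCliqueCover G 𝒞) :
    ∀ {S : Set V} {L : List (V × V)}, PSDValid G S L →
      L.length ≤ (𝒞.filter fun C => ¬C ⊆ S).card
  | _, [], _ => Nat.zero_le _
  | S, q :: L, ⟨hq, hL⟩ => by
    obtain ⟨C, hC𝒞, hq1, hq2⟩ := h𝒞.2 q.1 q.2 hq.2.2.1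
    have hC : C ∈ 𝒞.filter fun C => ¬C ⊆ S :=
      Finset.mem_filter.mpr ⟨hC𝒞, fun h => hq.2.1 (h hq2)⟩
    have hCblack := hq.subset_insert_of_isClique (h𝒞.1 C hC𝒞) hq1 hq2
    have hsub : (𝒞.filter fun C' => ¬C' ⊆ insert q.2 S) ⊆ (𝒞.filter fun C => ¬C ⊆ S).erase C := by
      intro D hD
      simp only [Finset.mem_filter, Finset.mem_erase] at hD ⊢
      exact ⟨fun hDC => hD.2 (hDC ▸ hCblack), hD.1,
        fun hDS => hD.2 (hDS.trans (Set.subset_insert _ _))⟩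
    have := Finset.card_le_card hsub
    rw [Finset.card_erase_of_mem hC] at this
    have := Finset.card_pos.mpr ⟨C, hC⟩
    have := length_le_card_filter h𝒞 hL
    simp only [List.length_cons]
    omega

lemma exists_isCliqueCover [Finite V] (G : SimpleGraph V) : ∃ 𝒞, IsCliqueCover G 𝒞 :=
  ⟨(Set.toFinite {C : Set V | G.IsClique C}).toFinset,
    fun _ hC => (Set.Finite.mem_toFinset _).mp hC,
    fun u v huv => ⟨{u, v}, (Set.Finite.mem_toFinset _).mpr (isClique_pair.mpr fun _ => huv),
      by simp, by simp⟩⟩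

lemma exists_isCliqueCover_card_eq_ccNum [Finite V] (G : SimpleGraph V) :
    ∃ 𝒞, 𝒞.card = ccNum G ∧ IsCliqueCover G 𝒞 := by
  obtain ⟨𝒞, h𝒞⟩ := exists_isCliqueCover G
  exact Nat.sInf_mem (s := {n | ∃ 𝒞 : Finset (Set V), 𝒞.card = n ∧ IsCliqueCover G 𝒞})
    ⟨_, 𝒞, rfl, h𝒞⟩

lemma IsPSDForcingSet.card_le_ncard_add_ccNum [Finite V] {B : Set V}
    (hB : IsPSDForcingSet G B) : Nat.card V ≤ B.ncard + ccNum G := by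
  classical
  obtain ⟨L, hL, hall⟩ := hB
  obtain ⟨𝒞, h𝒞card, h𝒞⟩ := exists_isCliqueCover_card_eq_ccNum G
  calc Nat.card V = (applyForces B L).ncard := by rw [hall, Set.ncard_univ]
    _ ≤ B.ncard + L.length := ncard_applyForces_le B L
    _ ≤ B.ncard + (𝒞.filter fun C => ¬C ⊆ B).card := by
      gcongr; convert hL.length_le_card_filter h𝒞
    _ ≤ B.ncard + ccNum G := by
      gcongr; exact h𝒞card ▸ Finset.card_filter_le _ _

lemma isPSDForcingSet_univ (G : SimpleGraph V) : IsPSDForcingSet G Set.univ :=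
  ⟨[], trivial, rfl⟩

lemma card_sub_ccNum_le_psdNum [Finite V] (G : SimpleGraph V) :
    Nat.card V - ccNum G ≤ psdNum G := by
  obtain ⟨B, hB, hBforce⟩ : psdNum G ∈ {n | ∃ B : Set V, B.ncard = n ∧ IsPSDForcingSet G B} :=
    Nat.sInf_mem ⟨_, Set.univ, rfl, isPSDForcingSet_univ G⟩
  have := hBforce.card_le_ncard_add_ccNum
  omega

end LowerBound

section UpperBound

lemma psdNum_le_ncard {B : Set V} (hB : IsPSDForcingSet G B) : psdNum G ≤ B.ncard :=
  Nat.sInf_le ⟨B, rfl, hB⟩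

lemma IsPSDForcingSet.of_insert {S : Set V} {u w : V} (h : PSDForce G S u w)
    (hS : IsPSDForcingSet G (insert w S)) : IsPSDForcingSet G S :=
  let ⟨L, hL, hall⟩ := hS
  ⟨(u, w) :: L, ⟨h, hL⟩, hall⟩

lemma ConnOutside.exists_walk_induce {S t : Set V} (hS : Sᶜ ⊆ t) {x w : V}
    (h : ConnOutside G S x w) (hx : x ∉ S) (hw : w ∉ S) :
    ∃ p : (G.induce t).Walk ⟨x, hS hx⟩ ⟨w, hS hw⟩, ∀ a ∈ p.support, (a : V) ∉ S := by
  induction h using Relation.ReflTransGen.head_induction_on with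
  | refl => exact ⟨.nil, by simpa using hw⟩
  | head hxy _ ih =>
    obtain ⟨p, hp⟩ := ih hxy.2.1
    refine ⟨.cons (by simpa using hxy.2.2) p, ?_⟩
    simp only [Walk.support_cons, List.mem_cons, forall_eq_or_imp]
    exact ⟨hx, hp⟩

lemma psdForce_of_isAcyclic_induce {t S : Set V} (ht : (G.induce t).IsAcyclic) (hS : tᶜ ⊆ S)
    {u w : V} (hu : u ∈ S) (hut : u ∈ t) (hw : w ∉ S) (huw : G.Adj u w) : PSDForce G S u w := by
  refine ⟨hu, hw, huw, fun x hux hx hxw => ?_⟩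
  obtain ⟨p, hp⟩ := hxw.exists_walk_induce (Set.compl_subset_comm.mp hS) hx hw
  exact congrArg Subtype.val <| ht.eq_of_adj_of_walk (u := ⟨u, hut⟩) (by simpa using hux)
    (by simpa using huw) p fun h => hp _ h hu

lemma exists_psdForce_of_isTree_induce {t S : Set V} (ht : (G.induce t).IsTree) (hS : tᶜ ⊆ S)
    {v b : V} (hvt : v ∈ t) (hv : v ∈ S) (hb : b ∉ S) : ∃ u w, PSDForce G S u w := by
  have hbt : b ∈ t := by_contra fun h => hb (hS h)
  obtain ⟨p⟩ := ht.connected (⟨v, hvt⟩ : t) ⟨b, hbt⟩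
  obtain ⟨d, -, hd1, hd2⟩ := p.exists_boundary_dart {a | (a : V) ∈ S} hv hb
  exact ⟨_, _, psdForce_of_isAcyclic_induce ht.isAcyclic hS hd1 d.fst.2 hd2 (by simpa using d.adj)⟩

lemma isPSDForcingSet_of_isTree_induce [Finite V] {t S : Set V} (ht : (G.induce t).IsTree)
    (hS : tᶜ ⊆ S) {v : V} (hvt : v ∈ t) (hv : v ∈ S) : IsPSDForcingSet G S := by
  induction hn : Sᶜ.ncard generalizing S with
  | zero =>
    rw [Set.ncard_eq_zero, Set.compl_empty_iff] at hn
    exact hn ▸ isPSDForcingSet_univ G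
  | succ n ih =>
    obtain ⟨b, hb⟩ := Set.nonempty_of_ncard_ne_zero (s := Sᶜ) (by omega)
    obtain ⟨u, w, huw⟩ := exists_psdForce_of_isTree_induce ht hS hvt hv hb
    refine .of_insert huw (ih (hS.trans (Set.subset_insert _ _)) (Set.mem_insert_of_mem _ hv) ?_)
    have : (insert w S)ᶜ = Sᶜ \ {w} := by ext; simp [and_comm]
    rw [this, Set.ncard_sdiff_singleton_of_mem huw.2.1, hn]; rfl

end UpperBound

/-- If `G` has an induced subtree `T` with `|V(T)| − 1 = cc(G)`,
then `Z₊(G) = |V(G)| − |V(T)| + 1`; in particular colouring any one vertex of `T`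
together with all vertices outside `T` black yields an optimal positive zero forcing
set. -/
theorem psdNum_of_induced_subtree {V : Type*} [Fintype V] (G : SimpleGraph V)
    (t : Set V) (ht : (G.induce t).IsTree) (hcc : t.ncard - 1 = ccNum G) :
    psdNum G = Fintype.card V - t.ncard + 1 ∧
      ∀ v ∈ t, IsPSDForcingSet G (insert v tᶜ) ∧ (insert v tᶜ).ncard = psdNum G := by
  have hforce (v) (hv : v ∈ t) : IsPSDForcingSet G (insert v tᶜ) :=
    isPSDForcingSet_of_isTree_induce ht (Set.subset_insert _ _) hv (Set.mem_insert _ _)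
  have hsum : t.ncard + tᶜ.ncard = Fintype.card V :=
    Nat.card_eq_fintype_card (α := V) ▸ Set.ncard_add_ncard_compl t
  have hcard (v) (hv : v ∈ t) : (insert v tᶜ).ncard = Fintype.card V - t.ncard + 1 := by
    rw [Set.ncard_insert_of_notMem (by simpa using hv)]
    omega
  obtain ⟨v, hv⟩ : t.Nonempty := Set.nonempty_coe_sort.mp ht.connected.nonempty
  have ht_pos : 0 < t.ncard := (Set.ncard_pos).mpr ⟨v, hv⟩
  have hupper := hcard v hv ▸ psdNum_le_ncard (hforce v hv)
  have hlower := Nat.card_eq_fintype_card (α := V) ▸ card_sub_ccNum_le_psdNum G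
  have hpsd : psdNum G = Fintype.card V - t.ncard + 1 := by omega
  exact ⟨hpsd, fun v hv => ⟨hforce v hv, by rw [hcard v hv, hpsd]⟩⟩
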